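/- arXiv:1512.00420 — 2 statements merged into one kernel-verified Lean document; each statement's English description precedes it below -/
import Mathlib

section
/- Let K be a field of characteristic zero equipped with a surjective discrete valuation ord : K^× → ℤ, a chosen uniformizer ϖ, and angular component maps ac_e. Let n ≥ 2 and let x_1, …, x_n ∈ K be pairwise distinct, and set y = (x_1 + ⋯ + x_n)/n. Then there exist an integer e ≥ 1 and indices i ≠ j such that ac_e(x_i − y) ≠ ac_e(x_j − y). -/
/-!
Suppose all `ac_e (x_i - y)`, `e ≥ 1`, agreed. None of the `a_i = x_i - y` can vanish, since
`ac_1` separates `0` from the other (nonzero) `a_j`. The angular components of `a_i` and `a_j`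
agreeing to every order forces `ϖ^{-ord a_i} a_i = ϖ^{-ord a_j} a_j`, so the `a_i` are one unit
times distinct powers of `ϖ`, and their orders are pairwise distinct. A sum of elements of pairwise
distinct orders has the order of its smallest term, so it cannot be `0`; but `∑ a_i = 0`.
-/

theorem WithTop.eq_top_of_forall_natCast_le {w : WithTop ℤ}
    (h : ∀ e : ℕ, 1 ≤ e → ((e : ℤ) : WithTop ℤ) ≤ w) : w = ⊤ := by
  induction w with
  | top => rfl
  | coe k =>
    have hk : ((k.toNat + 1 : ℕ) : ℤ) ≤ k := by exact_mod_cast h (k.toNat + 1) (by omega)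
    omega

theorem WithTop.map_one_eq_zero_of_map_mul {M : Type*} [MulOneClass M] {f : M → WithTop ℤ}
    (h1 : f 1 ≠ ⊤) (hmul : ∀ x y, f (x * y) = f x + f y) : f 1 = 0 := by
  obtain ⟨k, hk⟩ := WithTop.ne_top_iff_exists.mp h1
  have hkk : ((k + k : ℤ) : WithTop ℤ) = k := by
    rw [WithTop.coe_add, hk, ← hmul, mul_one]
  have hk0 : k = 0 := by
    have : k + k = k := by exact_mod_cast hkk
    omega
  rw [← hk, hk0]
  rfl

theorem AddValuation.exists_map_sum_eq_of_injOn {R Γ₀ : Type*} [Ring R]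
    [LinearOrderedAddCommMonoidWithTop Γ₀] (v : AddValuation R Γ₀) {ι : Type*} {s : Finset ι}
    (hs : s.Nonempty) {f : ι → R} (hf : Set.InjOn (v ∘ f) s) :
    ∃ j ∈ s, v (∑ i ∈ s, f i) = v (f j) := by
  classical
  obtain ⟨j, hj, hmin⟩ := s.exists_min_image (v ∘ f) hs
  refine ⟨j, hj, ?_⟩
  have hlt : ∀ i ∈ s.erase j, v (f j) < v (f i) := fun i hi =>
    (hmin i (Finset.mem_of_mem_erase hi)).lt_of_ne
      fun h => Finset.ne_of_mem_erase hi (hf (Finset.mem_of_mem_erase hi) hj h.symm)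
  rw [← Finset.add_sum_erase s f hj]
  by_cases htop : v (f j) = ⊤
  · rw [htop, ← top_le_iff]
    exact v.map_le_add htop.ge (v.map_le_sum fun i hi => htop ▸ (hlt i hi).le)
  · exact v.map_add_eq_of_lt_left (v.map_lt_sum htop hlt)

theorem Finset.sum_sub_average_eq_zero {ι K : Type*} [Fintype ι] [Nonempty ι] [Field K]
    [CharZero K] (x : ι → K) : ∑ i, (x i - (∑ j, x j) / (Fintype.card ι : K)) = 0 := by
  rw [Finset.sum_sub_distrib, Finset.sum_const, Finset.card_univ, nsmul_eq_mul,
    mul_div_cancel₀ _ (by exact_mod_cast Fintype.card_ne_zero), sub_self]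

theorem normalize_eq_of_forall_ac_eq {K : Type*} [Field K] {ord : K → WithTop ℤ}
    (ord_ne_top : ∀ x : K, x ≠ 0 → ord x ≠ ⊤) {ϖ : K} {R : ℕ → Type*} {ac : (e : ℕ) → K → R e}
    (ac_eq_iff : ∀ e : ℕ, ∀ a b : K, a ≠ 0 → b ≠ 0 →
      (ac e a = ac e b ↔
        ((e : ℤ) : WithTop ℤ) ≤
          ord (ϖ ^ (-(ord a).untopD 0) * a - ϖ ^ (-(ord b).untopD 0) * b)))
    {a b : K} (ha : a ≠ 0) (hb : b ≠ 0) (h : ∀ e : ℕ, 1 ≤ e → ac e a = ac e b) :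
    ϖ ^ (-(ord a).untopD 0) * a = ϖ ^ (-(ord b).untopD 0) * b := by
  by_contra hne
  exact ord_ne_top _ (sub_ne_zero.mpr hne)
    (WithTop.eq_top_of_forall_natCast_le fun e he => (ac_eq_iff e a b ha hb).mp (h e he))

theorem eq_of_ord_eq_of_forall_ac_eq {K : Type*} [Field K] {ord : K → WithTop ℤ}
    (ord_ne_top : ∀ x : K, x ≠ 0 → ord x ≠ ⊤) {ϖ : K} (hϖ : ϖ ≠ 0) {R : ℕ → Type*}
    {ac : (e : ℕ) → K → R e}
    (ac_eq_iff : ∀ e : ℕ, ∀ a b : K, a ≠ 0 → b ≠ 0 →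
      (ac e a = ac e b ↔
        ((e : ℤ) : WithTop ℤ) ≤
          ord (ϖ ^ (-(ord a).untopD 0) * a - ϖ ^ (-(ord b).untopD 0) * b)))
    {a b : K} (ha : a ≠ 0) (hb : b ≠ 0) (hord : ord a = ord b)
    (h : ∀ e : ℕ, 1 ≤ e → ac e a = ac e b) : a = b := by
  have hnorm := normalize_eq_of_forall_ac_eq ord_ne_top ac_eq_iff ha hb h
  rw [hord] at hnorm
  exact mul_left_cancel₀ (zpow_ne_zero _ hϖ) hnorm

theorem statement0_general
    {K : Type*} [Field K] [CharZero K]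
    -- the valuation, extended by `ord 0 = ∞`
    (ord : K → WithTop ℤ)
    (ord_zero : ord 0 = ⊤)
    (ord_ne_top : ∀ x : K, x ≠ 0 → ord x ≠ ⊤)
    (ord_mul : ∀ x y : K, ord (x * y) = ord x + ord y)
    (ord_add : ∀ x y : K, min (ord x) (ord y) ≤ ord (x + y))
    -- the chosen uniformizer
    (ϖ : K) (hϖ : ord ϖ = ((1 : ℤ) : WithTop ℤ))
    -- the residue rings `R_e = O_K / M_K^e` and the angular component maps `ac_e`
    (R : ℕ → Type*) [∀ e, CommRing (R e)]
    (ac : (e : ℕ) → K → R e)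
    (ac_zero : ∀ e : ℕ, ac e 0 = 0)
    (ac_ne_zero : ∀ e : ℕ, 1 ≤ e → ∀ x : K, x ≠ 0 → ac e x ≠ 0)
    (ac_eq_iff : ∀ e : ℕ, ∀ a b : K, a ≠ 0 → b ≠ 0 →
      (ac e a = ac e b ↔
        ((e : ℤ) : WithTop ℤ) ≤
          ord (ϖ ^ (-(ord a).untopD 0) * a - ϖ ^ (-(ord b).untopD 0) * b)))
    -- the data of the statement
    (n : ℕ) (hn : 2 ≤ n) (x : Fin n → K) (hx : Function.Injective x)
    (y : K) (hy : y = (∑ i, x i) / (n : K)) :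
    ∃ e : ℕ, 1 ≤ e ∧ ∃ i j : Fin n, i ≠ j ∧ ac e (x i - y) ≠ ac e (x j - y) := by
  by_contra! hcon
  set a : Fin n → K := fun i => x i - y
  have ha_inj : Function.Injective a := sub_left_injective.comp hx
  have : NeZero n := ⟨by omega⟩
  have hsum : ∑ i, a i = 0 := by
    simpa [a, hy] using Finset.sum_sub_average_eq_zero x
  have ha0 : ∀ i, a i ≠ 0 := by
    intro i hi
    have : Nontrivial (Fin n) := Fin.nontrivial_iff_two_le.mpr hn
    obtain ⟨j, hji⟩ := exists_ne i
    have hac : ac 1 (a j) = ac 1 (a i) := hcon 1 le_rfl j i hji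
    rw [hi, ac_zero] at hac
    exact ac_ne_zero 1 le_rfl (a j) (hi ▸ ha_inj.ne hji) hac
  have hϖ0 : ϖ ≠ 0 := by
    rintro rfl
    simp [ord_zero] at hϖ
  have hord_inj : Set.InjOn (ord ∘ a) (Finset.univ : Finset (Fin n)) := by
    intro i _ j _ hij
    by_contra hne
    exact hne <| ha_inj <| eq_of_ord_eq_of_forall_ac_eq ord_ne_top hϖ0 ac_eq_iff (ha0 i) (ha0 j)
      hij (hcon · · i j hne)
  let v : AddValuation K (WithTop ℤ) := .of ord ord_zero
    (WithTop.map_one_eq_zero_of_map_mul (ord_ne_top 1 one_ne_zero) ord_mul) ord_add ord_mul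
  obtain ⟨j, -, hj⟩ := v.exists_map_sum_eq_of_injOn Finset.univ_nonempty hord_inj
  rw [hsum] at hj
  exact ord_ne_top (a j) (ha0 j) (hj.symm.trans ord_zero)

theorem statement0
    {K : Type*} [Field K] [CharZero K]
    -- the valuation, extended by `ord 0 = ∞`
    (ord : K → WithTop ℤ)
    (ord_zero : ord 0 = ⊤)
    (ord_ne_top : ∀ x : K, x ≠ 0 → ord x ≠ ⊤)
    (ord_mul : ∀ x y : K, ord (x * y) = ord x + ord y)
    (ord_add : ∀ x y : K, min (ord x) (ord y) ≤ ord (x + y))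
    (ord_surj : ∀ k : ℤ, ∃ x : K, ord x = (k : WithTop ℤ))
    -- the chosen uniformizer
    (ϖ : K) (hϖ : ord ϖ = ((1 : ℤ) : WithTop ℤ))
    -- the residue rings `R_e = O_K / M_K^e` and the angular component maps `ac_e`
    (R : ℕ → Type*) [∀ e, CommRing (R e)]
    (ac : (e : ℕ) → K → R e)
    (ac_zero : ∀ e : ℕ, ac e 0 = 0)
    (ac_ne_zero : ∀ e : ℕ, 1 ≤ e → ∀ x : K, x ≠ 0 → ac e x ≠ 0)
    (ac_eq_iff : ∀ e : ℕ, ∀ a b : K, a ≠ 0 → b ≠ 0 →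
      (ac e a = ac e b ↔
        ((e : ℤ) : WithTop ℤ) ≤
          ord (ϖ ^ (-(ord a).untopD 0) * a - ϖ ^ (-(ord b).untopD 0) * b)))
    -- the data of the statement
    (n : ℕ) (hn : 2 ≤ n) (x : Fin n → K) (hx : Function.Injective x)
    (y : K) (hy : y = (∑ i, x i) / (n : K)) :
    ∃ e : ℕ, 1 ≤ e ∧ ∃ i j : Fin n, i ≠ j ∧ ac e (x i - y) ≠ ac e (x j - y) :=
  statement0_general ord ord_zero ord_ne_top ord_mul ord_add ϖ hϖ R ac ac_zero ac_ne_zero ac_eq_iff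
    n hn x hx y hy
end

section
/- Let K be as in the context, let Λ', Λ ∈ D with Λ' ⊆ Λ, let x ∈ K^m, and suppose X ⊆ K^m is a local Λ-cone with origin x, i.e. X = C ∩ B(x,α) for some Λ-cone C with origin x and some α ∈ ℤ. Then C_x^{Λ'}(X) = C_x^{Λ}(X). -/
/-!
Every `λ ∈ Λ_{n₁,m₁}` factors as `λ = ϖ^k μ` with `k = n₂ ⌊ord λ / n₂⌋`, so that
`ϖ^k ∈ Λ_{n₂,m₂}`, and `μ ∈ Λ_{n₁,m₁}` of order `ord λ mod n₂ ≥ 0` (this uses `n₁ ∣ n₂`,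
forced by `Λ' ⊆ Λ`). If `λ(y − x)` approximates `u` with `y` in the local cone, then so does
`ϖ^k(y' − x)` for `y' = x + μ(y − x)`, which lies in the cone and, as `ord μ ≥ 0`, is no
farther from `x` than `y`.
-/

/-- `ord` of a tuple: the minimum of the coordinatewise valuations. -/
def vord {K : Type*} (ord : K → WithTop ℤ) {m : ℕ} (x : Fin m → K) : WithTop ℤ :=
  Finset.univ.inf fun j => ord (x j)

/-- The subgroup `Λ_{n,m} = {λ ∈ K^× : ac_m(λ) = 1, ord λ ≡ 0 mod n}` of `K^×`. -/
def Lam {K : Type*} [Field K] (ord : K → WithTop ℤ) (ϖ : K) (n m : ℕ) : Set K :=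
  {l | l ≠ 0 ∧ ((m : ℤ) : WithTop ℤ) ≤ ord (ϖ ^ (-(ord l).untopD 0) * l - 1) ∧
    (n : ℤ) ∣ (ord l).untopD 0}

/-- The tangent `Λ`-cone of `X ⊆ K^m` at `x`. -/
def tanCone {K : Type*} [Field K] (ord : K → WithTop ℤ) (Λ : Set K) {m : ℕ}
    (x : Fin m → K) (X : Set (Fin m → K)) : Set (Fin m → K) :=
  {u | ∀ i : ℤ, ∃ y ∈ X, ∃ l ∈ Λ, (i : WithTop ℤ) ≤ vord ord (y - x) ∧
    (i : WithTop ℤ) ≤ vord ord (l • (y - x) - u)}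

/-- A `Λ`-cone with origin `x`: stable under `y ↦ x + λ(y − x)` for `λ ∈ Λ`. -/
def IsCone {K : Type*} [Field K] (Λ : Set K) {m : ℕ} (x : Fin m → K)
    (C : Set (Fin m → K)) : Prop :=
  ∀ y ∈ C, ∀ l ∈ Λ, x + l • (y - x) ∈ C

section

variable {K : Type*} [Field K] {ord : K → WithTop ℤ} {ϖ : K}

theorem ord_one_of_ord_mul (ord_mul : ∀ x y : K, ord (x * y) = ord x + ord y)
    (hϖ : ord ϖ = ((1 : ℤ) : WithTop ℤ)) : ord 1 = 0 := by
  have h := ord_mul ϖ 1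
  rw [mul_one, hϖ, eq_comm, WithTop.add_eq_coe] at h
  obtain ⟨a, b, ha, hb, hab⟩ := h
  rw [WithTop.coe_inj] at ha
  rw [← hb]
  norm_cast
  omega

theorem ord_zpow (ord_mul : ∀ x y : K, ord (x * y) = ord x + ord y)
    (hϖ : ord ϖ = ((1 : ℤ) : WithTop ℤ)) (hϖ0 : ϖ ≠ 0) (k : ℤ) :
    ord (ϖ ^ k) = (k : WithTop ℤ) := by
  induction k using Int.induction_on with
  | zero => simpa using ord_one_of_ord_mul ord_mul hϖ
  | succ i ih =>
    rw [zpow_add_one₀ hϖ0, ord_mul, ih, hϖ]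
    norm_cast
  | pred i ih =>
    have h := ord_mul (ϖ ^ (-(i : ℤ) - 1)) ϖ
    rw [← zpow_add_one₀ hϖ0, sub_add_cancel, ih, hϖ, eq_comm, WithTop.add_eq_coe] at h
    obtain ⟨a, b, ha, hb, hab⟩ := h
    rw [WithTop.coe_inj] at hb
    rw [← ha]
    norm_cast
    omega

theorem zpow_mem_Lam (ord_zero : ord 0 = ⊤)
    (ord_mul : ∀ x y : K, ord (x * y) = ord x + ord y)
    (hϖ : ord ϖ = ((1 : ℤ) : WithTop ℤ)) (hϖ0 : ϖ ≠ 0) {n : ℕ} (m : ℕ) {k : ℤ}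
    (hk : (n : ℤ) ∣ k) : ϖ ^ k ∈ Lam ord ϖ n m := by
  refine ⟨zpow_ne_zero _ hϖ0, ?_, ?_⟩ <;> rw [ord_zpow ord_mul hϖ hϖ0, WithTop.untopD_coe]
  · rw [← zpow_add₀ hϖ0, neg_add_cancel, zpow_zero, sub_self, ord_zero]
    exact le_top
  · exact hk

theorem zpow_mul_mem_Lam (ord_ne_top : ∀ x : K, x ≠ 0 → ord x ≠ ⊤)
    (ord_mul : ∀ x y : K, ord (x * y) = ord x + ord y)
    (hϖ : ord ϖ = ((1 : ℤ) : WithTop ℤ)) (hϖ0 : ϖ ≠ 0) {n m : ℕ} {l : K} {k : ℤ}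
    (hl : l ∈ Lam ord ϖ n m) (hk : (n : ℤ) ∣ k) : ϖ ^ k * l ∈ Lam ord ϖ n m := by
  obtain ⟨hl0, hac, hdvd⟩ := hl
  obtain ⟨a, ha⟩ := WithTop.ne_top_iff_exists.mp (ord_ne_top l hl0)
  have hord : ord (ϖ ^ k * l) = ((k + a : ℤ) : WithTop ℤ) := by
    rw [ord_mul, ord_zpow ord_mul hϖ hϖ0, ← ha]
    norm_cast
  rw [← ha, WithTop.untopD_coe] at hac hdvd
  refine ⟨mul_ne_zero (zpow_ne_zero _ hϖ0) hl0, ?_, ?_⟩ <;> rw [hord, WithTop.untopD_coe]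
  · rwa [← mul_assoc, ← zpow_add₀ hϖ0, show -(k + a) + k = -a by ring]
  · exact dvd_add hk hdvd

theorem dvd_of_Lam_subset (ord_zero : ord 0 = ⊤)
    (ord_mul : ∀ x y : K, ord (x * y) = ord x + ord y)
    (hϖ : ord ϖ = ((1 : ℤ) : WithTop ℤ)) (hϖ0 : ϖ ≠ 0) {n₁ m₁ n₂ m₂ : ℕ}
    (hsub : Lam ord ϖ n₂ m₂ ⊆ Lam ord ϖ n₁ m₁) : (n₁ : ℤ) ∣ n₂ := by
  have h := (hsub (zpow_mem_Lam ord_zero ord_mul hϖ hϖ0 m₂ (dvd_refl (n₂ : ℤ)))).2.2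
  rwa [ord_zpow ord_mul hϖ hϖ0, WithTop.untopD_coe] at h

theorem exists_mem_Lam_mul_nonneg_ord (ord_zero : ord 0 = ⊤)
    (ord_ne_top : ∀ x : K, x ≠ 0 → ord x ≠ ⊤)
    (ord_mul : ∀ x y : K, ord (x * y) = ord x + ord y)
    (hϖ : ord ϖ = ((1 : ℤ) : WithTop ℤ)) (hϖ0 : ϖ ≠ 0) {n₁ m₁ n₂ : ℕ} (m₂ : ℕ)
    (hn : (n₁ : ℤ) ∣ n₂) (hn₂ : n₂ ≠ 0) {l : K} (hl : l ∈ Lam ord ϖ n₁ m₁) :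
    ∃ l' ∈ Lam ord ϖ n₂ m₂, ∃ μ ∈ Lam ord ϖ n₁ m₁, 0 ≤ ord μ ∧ l = l' * μ := by
  obtain ⟨a, ha⟩ := WithTop.ne_top_iff_exists.mp (ord_ne_top l hl.1)
  set k : ℤ := n₂ * (a / n₂)
  have hk : (n₂ : ℤ) ∣ k := dvd_mul_right _ _
  refine ⟨ϖ ^ k, zpow_mem_Lam ord_zero ord_mul hϖ hϖ0 m₂ hk, ϖ ^ (-k) * l,
    zpow_mul_mem_Lam ord_ne_top ord_mul hϖ hϖ0 hl (hn.trans hk).neg_right, ?_, ?_⟩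
  · rw [ord_mul, ord_zpow ord_mul hϖ hϖ0, ← ha]
    have hmod : 0 ≤ -k + a := by
      rw [neg_add_eq_sub, ← Int.emod_def]
      exact Int.emod_nonneg a (by exact_mod_cast hn₂)
    exact_mod_cast hmod
  · rw [← mul_assoc, ← zpow_add₀ hϖ0, add_neg_cancel, zpow_zero, one_mul]

theorem vord_le_vord_smul (ord_mul : ∀ x y : K, ord (x * y) = ord x + ord y) {m : ℕ}
    {c : K} (hc : 0 ≤ ord c) (v : Fin m → K) : vord ord v ≤ vord ord (c • v) :=
  Finset.le_inf fun j _ => (Finset.inf_le (Finset.mem_univ j)).trans <| by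
    rw [Pi.smul_apply, smul_eq_mul, ord_mul]
    exact le_add_of_nonneg_left hc

theorem tanCone_mono {Λ' Λ : Set K} (h : Λ' ⊆ Λ) {m : ℕ} (x : Fin m → K)
    (X : Set (Fin m → K)) : tanCone ord Λ' x X ⊆ tanCone ord Λ x X := fun _ hu i => by
  obtain ⟨y, hy, l, hl, hyi, hui⟩ := hu i
  exact ⟨y, hy, l, h hl, hyi, hui⟩

theorem tanCone_cone_inter_ball_eq (ord_mul : ∀ x y : K, ord (x * y) = ord x + ord y)
    {Λ' Λ : Set K} (hsub : Λ' ⊆ Λ)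
    (hfactor : ∀ l ∈ Λ, ∃ l' ∈ Λ', ∃ μ ∈ Λ, 0 ≤ ord μ ∧ l = l' * μ)
    {m : ℕ} {x : Fin m → K} {C : Set (Fin m → K)} (hC : IsCone Λ x C) (α : ℤ) :
    tanCone ord Λ' x (C ∩ {y | (α : WithTop ℤ) ≤ vord ord (y - x)}) =
      tanCone ord Λ x (C ∩ {y | (α : WithTop ℤ) ≤ vord ord (y - x)}) := by
  refine (tanCone_mono hsub x _).antisymm fun u hu i => ?_
  obtain ⟨y, ⟨hyC, hyα⟩, l, hl, hyi, hui⟩ := hu i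
  obtain ⟨l', hl', μ, hμ, hμ0, rfl⟩ := hfactor l hl
  have hy' : x + μ • (y - x) - x = μ • (y - x) := add_sub_cancel_left _ _
  have hle := vord_le_vord_smul ord_mul hμ0 (y - x)
  refine ⟨x + μ • (y - x), ⟨hC y hyC μ hμ, ?_⟩, l', hl', ?_, ?_⟩ <;>
    simp only [Set.mem_ofPred_eq, hy']
  · exact hyα.trans hle
  · exact hyi.trans hle
  · rwa [smul_smul]

end

theorem statement3_general
    {K : Type*} [Field K]
    (ord : K → WithTop ℤ)
    (ord_zero : ord 0 = ⊤)
    (ord_ne_top : ∀ x : K, x ≠ 0 → ord x ≠ ⊤)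
    (ord_mul : ∀ x y : K, ord (x * y) = ord x + ord y)
    (ϖ : K) (hϖ : ord ϖ = ((1 : ℤ) : WithTop ℤ))
    {m : ℕ} (x : Fin m → K) (X : Set (Fin m → K))
    (n₁ m₁ n₂ m₂ : ℕ) (hn₂ : 1 ≤ n₂)
    (hsub : Lam ord ϖ n₂ m₂ ⊆ Lam ord ϖ n₁ m₁)
    -- `X` is a local `Λ`-cone with origin `x`
    (hX : ∃ (C : Set (Fin m → K)) (α : ℤ), IsCone (Lam ord ϖ n₁ m₁) x C ∧
      X = C ∩ {y | (α : WithTop ℤ) ≤ vord ord (y - x)}) :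
    tanCone ord (Lam ord ϖ n₂ m₂) x X = tanCone ord (Lam ord ϖ n₁ m₁) x X := by
  obtain ⟨C, α, hC, rfl⟩ := hX
  have hϖ0 : ϖ ≠ 0 := by
    rintro rfl
    simp [ord_zero] at hϖ
  have hn : (n₁ : ℤ) ∣ n₂ := dvd_of_Lam_subset ord_zero ord_mul hϖ hϖ0 hsub
  exact tanCone_cone_inter_ball_eq ord_mul hsub
    (fun _ hl => exists_mem_Lam_mul_nonneg_ord ord_zero ord_ne_top ord_mul hϖ hϖ0 m₂ hn
      (by omega) hl) hC α

theorem statement3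
    {K : Type*} [Field K] [CharZero K]
    (ord : K → WithTop ℤ)
    (ord_zero : ord 0 = ⊤)
    (ord_ne_top : ∀ x : K, x ≠ 0 → ord x ≠ ⊤)
    (ord_mul : ∀ x y : K, ord (x * y) = ord x + ord y)
    (ord_add : ∀ x y : K, min (ord x) (ord y) ≤ ord (x + y))
    (ord_surj : ∀ k : ℤ, ∃ x : K, ord x = (k : WithTop ℤ))
    (ϖ : K) (hϖ : ord ϖ = ((1 : ℤ) : WithTop ℤ))
    {m : ℕ} (x : Fin m → K) (X : Set (Fin m → K))
    (n₁ m₁ n₂ m₂ : ℕ) (hn₁ : 1 ≤ n₁) (hm₁ : 1 ≤ m₁) (hn₂ : 1 ≤ n₂) (hm₂ : 1 ≤ m₂)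
    (hsub : Lam ord ϖ n₂ m₂ ⊆ Lam ord ϖ n₁ m₁)
    -- `X` is a local `Λ`-cone with origin `x`
    (hX : ∃ (C : Set (Fin m → K)) (α : ℤ), IsCone (Lam ord ϖ n₁ m₁) x C ∧
      X = C ∩ {y | (α : WithTop ℤ) ≤ vord ord (y - x)}) :
    tanCone ord (Lam ord ϖ n₂ m₂) x X = tanCone ord (Lam ord ϖ n₁ m₁) x X :=
  statement3_general ord ord_zero ord_ne_top ord_mul ϖ hϖ x X n₁ m₁ n₂ m₂ hn₂ hsub hX
end
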